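/- Let M be the n²×n² convolution matrix of a k×k kernel applied to an n×n image padded only on the top and left (TL padding), with rows/columns ordered by row-major (raster) order of pixels. Then M is lower triangular. -/

import Mathlib

/-- The convolution matrix of a TL-padded (top-left padded) `k × k` convolution on an
`n × n` image, in row-major (raster) ordering of pixels.  The entry at row `(i,j)` and
column `(i',j')` is the coefficient of `X_{i',j'}` in `Y_{i,j}`. -/
def convMatrix (n k : ℕ) (K : ℕ → ℕ → ℝ) :
    Matrix (Fin n × Fin n) (Fin n × Fin n) ℝ := fun a b =>
  if (b.1 : ℕ) ≤ (a.1 : ℕ) ∧ (b.2 : ℕ) ≤ (a.2 : ℕ) ∧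
      (a.1 : ℕ) - (b.1 : ℕ) < k ∧ (a.2 : ℕ) - (b.2 : ℕ) < k then
    K (k - 1 - ((a.1 : ℕ) - (b.1 : ℕ))) (k - 1 - ((a.2 : ℕ) - (b.2 : ℕ)))
  else 0

theorem convMatrix_eq_zero_of_not_le {n k : ℕ} (K : ℕ → ℕ → ℝ) {a b : Fin n × Fin n}
    (h : ¬((b.1 : ℕ) ≤ a.1 ∧ (b.2 : ℕ) ≤ a.2)) : convMatrix n k K a b = 0 :=
  if_neg fun ⟨h1, h2, _⟩ => h ⟨h1, h2⟩

theorem rasterIndex_le {n i j i' j' : ℕ} (hi : i' ≤ i) (hj : j' ≤ j) :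
    i' * n + j' ≤ i * n + j :=
  Nat.add_le_add (Nat.mul_le_mul_right n hi) hj

/-- the TL-padded convolution matrix is lower triangular with respect to
row-major ordering: every entry strictly above the diagonal vanishes. -/
theorem convMatrix_lower_triangular (n k : ℕ) (K : ℕ → ℕ → ℝ)
    (a b : Fin n × Fin n)
    (hab : (a.1 : ℕ) * n + (a.2 : ℕ) < (b.1 : ℕ) * n + (b.2 : ℕ)) :
    convMatrix n k K a b = 0 :=
  convMatrix_eq_zero_of_not_le K fun ⟨h1, h2⟩ => (rasterIndex_le h1 h2).not_gt hab
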